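/- Let n ≥ 2 and σ ∈ (0,2). Let Γ : ℝ^n → ℝ be bounded and Lebesgue measurable with Γ ≤ 0 everywhere, Γ = 0 outside the closed ball of radius 3 centered at the origin, and Γ < 0 on a set of positive Lebesgue measure. Let P := Γ * K_{2−σ}. If at a point x ∈ ℝ^n the function P admits a second-order Taylor expansion, i.e. there exist a vector p ∈ ℝ^n and a symmetric n×n matrix H with P(x+y) = P(x) + ⟨p,y⟩ + ½ yᵀH y + o(|y|²) as y → 0, and H is positive semidefinite, then |x| ≤ 3. -/

import Mathlib

open MeasureTheory Filter Asymptotics Topology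

noncomputable section

/-- The constant `A(n,α) = π^{α - n/2} Γ((n-α)/2) / Γ(α/2)`. -/
def rieszA (n : ℕ) (α : ℝ) : ℝ :=
  Real.pi ^ (α - (n : ℝ) / 2) * Real.Gamma (((n : ℝ) - α) / 2) / Real.Gamma (α / 2)

/-- The Riesz kernel of order `2 - σ`: `K_{2-σ}(y) = A(n,2-σ)·|y|^{-n+2-σ}`. -/
def rieszKernel (n : ℕ) (σ : ℝ) (y : EuclideanSpace ℝ (Fin n)) : ℝ :=
  rieszA n (2 - σ) * ‖y‖ ^ (-(n : ℝ) + 2 - σ)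

/-- The Riesz potential `P = Γ * K_{2-σ}` (convolution over `ℝⁿ`). -/
def rieszPotential (n : ℕ) (σ : ℝ) (Γ : EuclideanSpace ℝ (Fin n) → ℝ)
    (x : EuclideanSpace ℝ (Fin n)) : ℝ :=
  ∫ y : EuclideanSpace ℝ (Fin n), Γ y * rieszKernel n σ (x - y)

/-!
For `β = 2 - n - σ` the kernel `|w|^β` is strictly subharmonic away from the origin:
`Δ|w|^β = β (β + n - 2) |w|^(β-2) = σ (n - 2 + σ) |w|^(β-2) > 0`. If `|x| > 3`, the points
`x - y` with `y ∈ supp Γ` stay in a compact set avoiding `0`, so the discrete Laplacian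
`Σ_i (K(z + t eᵢ) + K(z - t eᵢ) - 2 K(z))` of the kernel is at least `c t²` there, uniformly
for small `t`. Integrating against `Γ ≤ 0`, whose mass is negative, shows that the same
quantity for `P` at `x` is at most `c (∫ Γ) t² < 0`. The Taylor expansion makes it
`t² tr H + o(t²)` with `tr H ≥ 0`, a contradiction. Discrete Laplacians avoid differentiating
under the integral sign.
-/

open scoped RealInnerProductSpace

theorem mul_sq_le_second_difference {g g' g'' : ℝ → ℝ} {c t : ℝ}
    (hg : ∀ s, |s| ≤ |t| → HasDerivAt g (g' s) s)
    (hg' : ∀ s, |s| ≤ |t| → HasDerivAt g' (g'' s) s)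
    (hc : ∀ s, |s| ≤ |t| → c ≤ g'' s) :
    c * t ^ 2 ≤ g t + g (-t) - 2 * g 0 := by
  have hmem : ∀ s ∈ Set.Icc (-|t|) |t|, |s| ≤ |t| := fun s hs => abs_le.mpr hs
  have hint : ∀ s ∈ interior (Set.Icc (-|t|) |t|), |s| ≤ |t| := fun s hs =>
    hmem s (interior_subset hs)
  -- `g - c s² / 2` is convex, and we compare its values at `t`, `-t` and their midpoint `0`.
  have hconvex : ConvexOn ℝ (Set.Icc (-|t|) |t|) (fun s => g s - c / 2 * s ^ 2) := by
    refine convexOn_of_hasDerivWithinAt2_nonneg (f' := fun s => g' s - c * s)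
      (f'' := fun s => g'' s - c) (convex_Icc _ _) ?_ ?_ ?_ ?_
    · exact fun s hs => ((hg s (hmem s hs)).continuousAt.sub (by fun_prop)).continuousWithinAt
    · intro s hs
      refine ((hg s (hint s hs)).sub ?_).hasDerivWithinAt
      exact ((hasDerivAt_pow 2 s).const_mul (c / 2)).congr_deriv (by ring)
    · intro s hs
      refine ((hg' s (hint s hs)).sub ?_).hasDerivWithinAt
      simpa using (hasDerivAt_id s).const_mul c
    · exact fun s hs => sub_nonneg.mpr (hc s (hint s hs))
  have hmid := hconvex.2 (abs_le.mp le_rfl) (abs_le.mp (abs_neg t).le)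
    (by norm_num : (0 : ℝ) ≤ 1 / 2) (by norm_num : (0 : ℝ) ≤ 1 / 2) (by norm_num)
  norm_num [smul_eq_mul] at hmid
  linarith

section LineDerivatives

variable {E : Type*} [NormedAddCommGroup E] [InnerProductSpace ℝ E]

theorem hasDerivAt_norm_add_smul_rpow (z v : E) (α s : ℝ) (h : z + s • v ≠ 0) :
    HasDerivAt (fun s : ℝ => ‖z + s • v‖ ^ α)
      (α * ‖z + s • v‖ ^ (α - 2) * ⟪z + s • v, v⟫) s := by
  have hline : HasDerivAt (fun s : ℝ => z + s • v) v s := by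
    simpa using ((hasDerivAt_id s).smul_const v).const_add z
  have hsq := hline.norm_sq.rpow_const (p := α / 2)
    (Or.inl (pow_pos (norm_pos_iff.mpr h) 2).ne')
  have hpow : ∀ w : E, (‖w‖ ^ 2) ^ (α / 2) = ‖w‖ ^ α := fun w => by
    rw [← Real.rpow_natCast, ← Real.rpow_mul (norm_nonneg w)]; ring_nf
  have hpow' : (‖z + s • v‖ ^ 2) ^ (α / 2 - 1) = ‖z + s • v‖ ^ (α - 2) := by
    rw [← Real.rpow_natCast, ← Real.rpow_mul (norm_nonneg _)]; ring_nf
  simp only [hpow, hpow'] at hsq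
  exact hsq.congr_deriv (by ring)

def secondDerivNormRpow (α : ℝ) (w v : E) : ℝ :=
  α * ((α - 2) * ‖w‖ ^ (α - 4) * ⟪w, v⟫ ^ 2 + ‖w‖ ^ (α - 2) * ‖v‖ ^ 2)

theorem hasDerivAt_deriv_norm_add_smul_rpow (z v : E) (α s : ℝ) (h : z + s • v ≠ 0) :
    HasDerivAt (fun s : ℝ => α * ‖z + s • v‖ ^ (α - 2) * ⟪z + s • v, v⟫)
      (secondDerivNormRpow α (z + s • v) v) s := by
  have hinner : HasDerivAt (fun s : ℝ => ⟪z + s • v, v⟫) (‖v‖ ^ 2) s := by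
    simp only [inner_add_left, inner_smul_left, real_inner_self_eq_norm_sq, RCLike.conj_to_real]
    simpa using ((hasDerivAt_id s).mul_const (‖v‖ ^ 2)).const_add ⟪z, v⟫
  have h2 := ((hasDerivAt_norm_add_smul_rpow z v (α - 2) s h).const_mul α).mul hinner
  refine h2.congr_deriv ?_
  rw [secondDerivNormRpow, show α - 2 - 2 = α - 4 by ring]
  ring

theorem continuousAt_secondDerivNormRpow (α : ℝ) {w : E} (v : E) (hw : w ≠ 0) :
    ContinuousAt (fun w => secondDerivNormRpow α w v) w := by
  have hw : ‖w‖ ≠ 0 := norm_ne_zero_iff.mpr hw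
  unfold secondDerivNormRpow
  fun_prop (disch := exact Or.inl hw)

end LineDerivatives

section OrthonormalBasis

variable {ι E : Type*} [Fintype ι] [NormedAddCommGroup E] [InnerProductSpace ℝ E]

def discreteLaplacian (b : OrthonormalBasis ι ℝ E) (f : E → ℝ) (x : E) (t : ℝ) : ℝ :=
  ∑ i, (f (x + t • b i) + f (x - t • b i) - 2 * f x)

theorem discreteLaplacian_const_mul (b : OrthonormalBasis ι ℝ E) (a : ℝ) (f : E → ℝ) (x : E)
    (t : ℝ) : discreteLaplacian b (fun w => a * f w) x t = a * discreteLaplacian b f x t := by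
  simp only [discreteLaplacian, Finset.mul_sum]
  exact Finset.sum_congr rfl fun _ _ => by ring

theorem sum_secondDerivNormRpow (b : OrthonormalBasis ι ℝ E) (α : ℝ) {w : E} (hw : w ≠ 0) :
    ∑ i, secondDerivNormRpow α w (b i) = α * (α + Fintype.card ι - 2) * ‖w‖ ^ (α - 2) := by
  have hpow : ‖w‖ ^ (α - 4) * ‖w‖ ^ 2 = ‖w‖ ^ (α - 2) := by
    rw [← Real.rpow_natCast, ← Real.rpow_add (norm_pos_iff.mpr hw)]; norm_num; ring_nf
  simp only [secondDerivNormRpow, b.orthonormal.1, one_pow, mul_one, mul_add,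
    Finset.sum_add_distrib, ← Finset.mul_sum, b.sum_sq_inner_left, Finset.sum_const,
    Finset.card_univ, nsmul_eq_mul]
  linear_combination (α * (α - 2)) * hpow

theorem mul_sq_le_discreteLaplacian_norm_rpow (b : OrthonormalBasis ι ℝ E) {α c t : ℝ} {z : E}
    (hz : ∀ i s, |s| ≤ |t| → z + s • b i ≠ 0)
    (hc : ∀ s, |s| ≤ |t| → c ≤ ∑ i, secondDerivNormRpow α (z + s • b i) (b i)) :
    c * t ^ 2 ≤ discreteLaplacian b (fun w => ‖w‖ ^ α) z t := by
  have key := mul_sq_le_second_difference (g := fun s => ∑ i, ‖z + s • b i‖ ^ α)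
    (g' := fun s => ∑ i, α * ‖z + s • b i‖ ^ (α - 2) * ⟪z + s • b i, b i⟫)
    (fun s hs => HasDerivAt.fun_sum fun i _ =>
      hasDerivAt_norm_add_smul_rpow _ _ _ _ (hz i s hs))
    (fun s hs => HasDerivAt.fun_sum fun i _ =>
      hasDerivAt_deriv_norm_add_smul_rpow _ _ _ _ (hz i s hs)) hc
  simp only [discreteLaplacian, Finset.sum_sub_distrib, Finset.sum_add_distrib,
    ← Finset.mul_sum]
  simpa [neg_smul, ← sub_eq_add_neg, Finset.card_univ, nsmul_eq_mul] using key

theorem exists_pos_eventually_mul_sq_le_discreteLaplacian_norm_rpow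
    (b : OrthonormalBasis ι ℝ E) {K : Set E} (hK : IsCompact K) (h0 : (0 : E) ∉ K) {α : ℝ}
    (hα : 0 < α * (α + Fintype.card ι - 2)) :
    ∃ c > 0, ∀ᶠ t in 𝓝 (0 : ℝ), ∀ z ∈ K,
      c * t ^ 2 ≤ discreteLaplacian b (fun w => ‖w‖ ^ α) z t := by
  have hK0 : ∀ z ∈ K, z ≠ 0 := fun z hz h => h0 (h ▸ hz)
  obtain ⟨c, hc, hcK⟩ := hK.exists_forall_le' (a := 0)
    (f := fun z => α * (α + Fintype.card ι - 2) * ‖z‖ ^ (α - 2))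
    (ContinuousOn.mul continuousOn_const (continuous_norm.continuousOn.rpow_const
      fun z hz => Or.inl (norm_ne_zero_iff.mpr (hK0 z hz))))
    fun z hz => mul_pos hα (Real.rpow_pos_of_pos (norm_pos_iff.mpr (hK0 z hz)) _)
  -- Tube lemma: the bound `c` on `K × {0}` becomes `c / 2` on `K × (-δ, δ)`.
  have hnear : ∀ᶠ s in 𝓝 (0 : ℝ), ∀ z ∈ K,
      (∀ i, z + s • b i ≠ 0) ∧ c / 2 < ∑ i, secondDerivNormRpow α (z + s • b i) (b i) := by
    refine hK.eventually_forall_of_forall_eventually fun z hz => ?_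
    have hline : ∀ i, ContinuousAt (fun p : ℝ × E => p.2 + p.1 • b i) (0, z) := by fun_prop
    have hne : ∀ i, ∀ᶠ p : ℝ × E in 𝓝 (0, z), p.2 + p.1 • b i ≠ 0 := fun i =>
      (hline i).eventually_ne (by simpa using hK0 z hz)
    have hcont : ContinuousAt
        (fun p : ℝ × E => ∑ i, secondDerivNormRpow α (p.2 + p.1 • b i) (b i)) (0, z) := by
      refine tendsto_finsetSum _ fun i _ => ?_
      exact (continuousAt_secondDerivNormRpow α (b i) (hK0 z hz)).comp_of_eq (hline i) (by simp)
    have hlt : c / 2 < ∑ i, secondDerivNormRpow α (z + (0 : ℝ) • b i) (b i) := by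
      simpa [sum_secondDerivNormRpow b α (hK0 z hz)] using
        (half_lt_self hc).trans_le (hcK z hz)
    filter_upwards [eventually_all.mpr hne, hcont.eventually (lt_mem_nhds hlt)] with p h1 h2
    exact ⟨h1, h2⟩
  obtain ⟨δ, hδ, hδK⟩ := Metric.eventually_nhds_iff.mp hnear
  refine ⟨c / 2, half_pos hc, ?_⟩
  filter_upwards [Metric.ball_mem_nhds 0 hδ] with t ht z hz
  have hs : ∀ s, |s| ≤ |t| → dist s 0 < δ := fun s hs => by
    rw [Real.dist_eq, sub_zero]; exact hs.trans_lt (by simpa [Real.dist_eq] using ht)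
  exact mul_sq_le_discreteLaplacian_norm_rpow b (fun i s h => (hδK (hs s h) z hz).1 i)
    fun s h => (hδK (hs s h) z hz).2.le

section Convolution

variable [MeasurableSpace E] {μ : Measure E}

theorem integral_mul_discreteLaplacian_sub (b : OrthonormalBasis ι ℝ E) {Γ k : E → ℝ}
    {x : E} {t : ℝ}
    (hint : ∀ x' ∈ Metric.closedBall x |t|, Integrable (fun y => Γ y * k (x' - y)) μ) :
    Integrable (fun y => Γ y * discreteLaplacian b k (x - y) t) μ ∧
      ∫ y, Γ y * discreteLaplacian b k (x - y) t ∂μ =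
        discreteLaplacian b (fun x' => ∫ y, Γ y * k (x' - y) ∂μ) x t := by
  have hpt : (fun y => Γ y * discreteLaplacian b k (x - y) t) = fun y => ∑ i,
      (Γ y * k (x + t • b i - y) + Γ y * k (x - t • b i - y) - 2 * (Γ y * k (x - y))) := by
    funext y
    simp only [discreteLaplacian, Finset.mul_sum, sub_add_eq_add_sub, sub_right_comm x y]
    exact Finset.sum_congr rfl fun _ _ => by ring
  have hplus : ∀ i, Integrable (fun y => Γ y * k (x + t • b i - y)) μ := fun i =>
    hint _ (by simp [norm_smul, b.orthonormal.1 i])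
  have hminus : ∀ i, Integrable (fun y => Γ y * k (x - t • b i - y)) μ := fun i =>
    hint _ (by simp [norm_smul, b.orthonormal.1 i])
  have hx : Integrable (fun y => Γ y * k (x - y)) μ := hint x (by simp)
  have hsummand : ∀ i, Integrable (fun y => Γ y * k (x + t • b i - y)
      + Γ y * k (x - t • b i - y) - 2 * (Γ y * k (x - y))) μ := fun i =>
    ((hplus i).fun_add (hminus i)).sub (hx.const_mul 2)
  rw [hpt]
  refine ⟨integrable_finsetSum _ fun i _ => hsummand i, ?_⟩
  rw [integral_finsetSum _ fun i _ => hsummand i]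
  refine Finset.sum_congr rfl fun i _ => ?_
  rw [integral_sub ((hplus i).fun_add (hminus i)) (hx.const_mul 2),
    integral_add (hplus i) (hminus i), integral_const_mul]

theorem eventually_discreteLaplacian_convolution_le (b : OrthonormalBasis ι ℝ E)
    {Γ k : E → ℝ} {x : E} {R c : ℝ} (hΓ : Integrable Γ μ) (hneg : ∀ y, Γ y ≤ 0)
    (hsupp : ∀ y ∉ Metric.closedBall 0 R, Γ y = 0)
    (hk : ∀ᶠ t in 𝓝 (0 : ℝ), ∀ z ∈ Metric.closedBall x R,
      c * t ^ 2 ≤ discreteLaplacian b k z t)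
    (hint : ∀ᶠ x' in 𝓝 x, Integrable (fun y => Γ y * k (x' - y)) μ) :
    ∀ᶠ t in 𝓝 (0 : ℝ), discreteLaplacian b (fun x' => ∫ y, Γ y * k (x' - y) ∂μ) x t
      ≤ c * (∫ y, Γ y ∂μ) * t ^ 2 := by
  obtain ⟨δ, hδ, hδint⟩ := Metric.eventually_nhds_iff.mp hint
  filter_upwards [hk, Metric.ball_mem_nhds 0 hδ] with t ht htδ
  have htδ : |t| < δ := by simpa using htδ
  obtain ⟨hint_t, heq⟩ := integral_mul_discreteLaplacian_sub (μ := μ) b (k := k)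
    fun x' hx' => hδint (lt_of_le_of_lt hx' htδ)
  have hpt : ∀ y, Γ y * discreteLaplacian b k (x - y) t ≤ Γ y * (c * t ^ 2) := fun y => by
    by_cases hy : y ∈ Metric.closedBall 0 R
    · exact mul_le_mul_of_nonpos_left (ht _ (by simpa using hy)) (hneg y)
    · simp [hsupp y hy]
  calc discreteLaplacian b (fun x' => ∫ y, Γ y * k (x' - y) ∂μ) x t
      = ∫ y, Γ y * discreteLaplacian b k (x - y) t ∂μ := heq.symm
    _ ≤ ∫ y, Γ y * (c * t ^ 2) ∂μ := integral_mono hint_t (hΓ.mul_const _) hpt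
    _ = c * (∫ y, Γ y ∂μ) * t ^ 2 := by rw [integral_mul_const]; ring

end Convolution

end OrthonormalBasis

section Taylor

variable {ι : Type*} [Fintype ι]

theorem isLittleO_comp_smul_of_taylor {f : EuclideanSpace ℝ ι → ℝ} {x p : EuclideanSpace ℝ ι}
    {H : Matrix ι ι ℝ}
    (hTaylor : (fun y : EuclideanSpace ℝ ι =>
        f (x + y) - f x - (∑ i, p i * y i) - (1 / 2) * ∑ i, ∑ j, H i j * y i * y j)
        =o[𝓝 0] fun y => ‖y‖ ^ 2) (v : EuclideanSpace ℝ ι) :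
    (fun t : ℝ => f (x + t • v) - f x - t * (∑ i, p i * v i)
        - t ^ 2 / 2 * ∑ i, ∑ j, H i j * v i * v j) =o[𝓝 0] fun t => t ^ 2 := by
  have hline : Tendsto (fun t : ℝ => t • v) (𝓝 0) (𝓝 0) := by
    simpa using (tendsto_id (x := 𝓝 (0 : ℝ))).smul_const v
  refine ((hTaylor.comp_tendsto hline).congr_left fun t => ?_).trans_isBigO ?_
  · have hlin : ∑ i, p i * (t • v) i = t * ∑ i, p i * v i := by
      simp only [PiLp.smul_apply, smul_eq_mul, Finset.mul_sum]
      exact Finset.sum_congr rfl fun _ _ => by ring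
    have hquad : 1 / 2 * ∑ i, ∑ j, H i j * (t • v) i * (t • v) j
        = t ^ 2 / 2 * ∑ i, ∑ j, H i j * v i * v j := by
      simp only [PiLp.smul_apply, smul_eq_mul, Finset.mul_sum]
      exact Finset.sum_congr rfl fun _ _ => Finset.sum_congr rfl fun _ _ => by ring
    simp only [Function.comp_apply, hlin, hquad]
  · refine IsBigO.of_bound (‖v‖ ^ 2) (Eventually.of_forall fun t => le_of_eq ?_)
    simp [norm_smul, mul_pow, mul_comm]

theorem isLittleO_discreteLaplacian_sub_trace [DecidableEq ι] {f : EuclideanSpace ℝ ι → ℝ}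
    {x p : EuclideanSpace ℝ ι} {H : Matrix ι ι ℝ}
    (hTaylor : (fun y : EuclideanSpace ℝ ι =>
        f (x + y) - f x - (∑ i, p i * y i) - (1 / 2) * ∑ i, ∑ j, H i j * y i * y j)
        =o[𝓝 0] fun y => ‖y‖ ^ 2) :
    (fun t => discreteLaplacian (EuclideanSpace.basisFun ι ℝ) f x t - t ^ 2 * H.trace)
      =o[𝓝 0] fun t => t ^ 2 := by
  refine (IsLittleO.fun_sum (s := Finset.univ) fun i _ =>
    (isLittleO_comp_smul_of_taylor hTaylor (EuclideanSpace.single i 1)).add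
      (isLittleO_comp_smul_of_taylor hTaylor (-EuclideanSpace.single i 1))).congr_left fun t => ?_
  rw [discreteLaplacian, Matrix.trace, Finset.mul_sum, ← Finset.sum_sub_distrib]
  refine Finset.sum_congr rfl fun i _ => ?_
  simp [← sub_eq_add_neg]
  ring

end Taylor

theorem integral_neg_of_nonpos {α : Type*} [MeasurableSpace α] {μ : Measure α} {f : α → ℝ}
    (hf : Integrable f μ) (hneg : ∀ y, f y ≤ 0) (hpos : 0 < μ {y | f y < 0}) :
    ∫ y, f y ∂μ < 0 := by
  have hsupp : Function.support (-f) = {y | f y < 0} := by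
    ext y; simp [(hneg y).lt_iff_ne]
  have := (integral_pos_iff_support_of_nonneg (fun y => neg_nonneg.mpr (hneg y)) hf.neg).mpr
    (hsupp ▸ hpos)
  simpa [integral_neg] using this

theorem rieszA_pos {n : ℕ} {α : ℝ} (hα : 0 < α) (hαn : α < n) : 0 < rieszA n α := by
  unfold rieszA
  have := Real.Gamma_pos_of_pos (s := ((n : ℝ) - α) / 2) (by linarith)
  have := Real.Gamma_pos_of_pos (s := α / 2) (by linarith)
  positivity

theorem exists_pos_eventually_mul_sq_le_discreteLaplacian_rieszKernel {n : ℕ} (hn : 2 ≤ n)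
    {σ : ℝ} (hσ : σ ∈ Set.Ioo (0 : ℝ) 2)
    (b : OrthonormalBasis (Fin n) ℝ (EuclideanSpace ℝ (Fin n)))
    {K : Set (EuclideanSpace ℝ (Fin n))} (hK : IsCompact K) (h0 : 0 ∉ K) :
    ∃ c > 0, ∀ᶠ t in 𝓝 (0 : ℝ), ∀ z ∈ K,
      c * t ^ 2 ≤ discreteLaplacian b (rieszKernel n σ) z t := by
  obtain ⟨hσ0, hσ2⟩ := hσ
  have hn : (2 : ℝ) ≤ n := by exact_mod_cast hn
  have hβ : 0 < (-(n : ℝ) + 2 - σ) * (-(n : ℝ) + 2 - σ + Fintype.card (Fin n) - 2) := by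
    rw [Fintype.card_fin]; nlinarith
  obtain ⟨c, hc, hcK⟩ := exists_pos_eventually_mul_sq_le_discreteLaplacian_norm_rpow b hK h0 hβ
  have hA : 0 < rieszA n (2 - σ) := rieszA_pos (by linarith) (by linarith)
  refine ⟨rieszA n (2 - σ) * c, mul_pos hA hc, hcK.mono fun t ht z hz => ?_⟩
  rw [show rieszKernel n σ = fun w => rieszA n (2 - σ) * ‖w‖ ^ (-(n : ℝ) + 2 - σ) from rfl,
    discreteLaplacian_const_mul, mul_assoc]
  exact mul_le_mul_of_nonneg_left (ht z hz) hA.le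

theorem integrable_mul_rieszKernel_sub {n : ℕ} {σ R : ℝ} {Γ : EuclideanSpace ℝ (Fin n) → ℝ}
    (hΓ : Integrable Γ) (hsupp : ∀ y ∉ Metric.closedBall 0 R, Γ y = 0)
    {x : EuclideanSpace ℝ (Fin n)} (hx : R < ‖x‖) :
    Integrable (fun y => Γ y * rieszKernel n σ (x - y)) := by
  have hne : ∀ y ∈ Metric.closedBall (0 : EuclideanSpace ℝ (Fin n)) R, ‖x - y‖ ≠ 0 := by
    intro y hy
    have := norm_sub_norm_le x y
    rw [mem_closedBall_zero_iff] at hy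
    linarith
  obtain ⟨M, hM⟩ :=
    (isCompact_closedBall (0 : EuclideanSpace ℝ (Fin n)) R).exists_bound_of_continuousOn
      (f := fun y => rieszKernel n σ (x - y))
      (continuousOn_const.mul (ContinuousOn.rpow_const (by fun_prop) fun y hy =>
        Or.inl (hne y hy)))
  have hmeas : AEStronglyMeasurable (fun y => rieszKernel n σ (x - y)) :=
    (measurable_const.mul
      ((measurable_const.sub measurable_id).norm.pow_const _)).aestronglyMeasurable
  exact IntegrableOn.integrable_of_forall_notMem_eq_zero
    (hΓ.integrableOn.mul_bdd hmeas.restrict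
      (ae_restrict_of_forall_mem measurableSet_closedBall hM)) fun y hy => by simp [hsupp y hy]

theorem stmt3_general (n : ℕ) (hn : 2 ≤ n) (σ : ℝ) (hσ : σ ∈ Set.Ioo (0 : ℝ) 2)
    (Γ : EuclideanSpace ℝ (Fin n) → ℝ)
    (hb : ∃ C : ℝ, ∀ z, |Γ z| ≤ C) (hm : Measurable Γ)
    (hneg : ∀ z, Γ z ≤ 0)
    (hsupp : ∀ z : EuclideanSpace ℝ (Fin n), z ∉ Metric.closedBall 0 3 → Γ z = 0)
    (hpos : 0 < volume {z : EuclideanSpace ℝ (Fin n) | Γ z < 0})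
    (P : EuclideanSpace ℝ (Fin n) → ℝ) (hP : P = rieszPotential n σ Γ)
    (x : EuclideanSpace ℝ (Fin n)) (p : EuclideanSpace ℝ (Fin n))
    (H : Matrix (Fin n) (Fin n) ℝ)
    (hTaylor : (fun y : EuclideanSpace ℝ (Fin n) =>
        P (x + y) - P x - (∑ i, p i * y i) - (1 / 2) * ∑ i, ∑ j, H i j * y i * y j)
        =o[𝓝 (0 : EuclideanSpace ℝ (Fin n))] fun y => ‖y‖ ^ 2)
    (hHpsd : H.PosSemidef) :
    ‖x‖ ≤ 3 := by
  by_contra! hx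
  subst hP
  obtain ⟨C, hC⟩ := hb
  have hΓ : Integrable Γ :=
    (Measure.integrableOn_of_bounded measure_closedBall_lt_top.ne hm.aestronglyMeasurable
      (ae_of_all _ hC)).integrable_of_forall_notMem_eq_zero hsupp
  have hmass : ∫ z, Γ z < 0 := integral_neg_of_nonpos hΓ hneg hpos
  obtain ⟨c, hc, hk⟩ := exists_pos_eventually_mul_sq_le_discreteLaplacian_rieszKernel hn hσ
    (EuclideanSpace.basisFun (Fin n) ℝ) (isCompact_closedBall x 3)
    (by simpa [dist_comm] using hx)
  have hupper : ∀ᶠ t in 𝓝 (0 : ℝ), discreteLaplacian (EuclideanSpace.basisFun (Fin n) ℝ)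
      (rieszPotential n σ Γ) x t ≤ c * (∫ z, Γ z) * t ^ 2 :=
    eventually_discreteLaplacian_convolution_le _ hΓ hneg hsupp hk
      (eventually_of_mem ((isOpen_lt continuous_const continuous_norm).mem_nhds hx)
        fun x' hx' => integrable_mul_rieszKernel_sub hΓ hsupp hx')
  have hlower := (isLittleO_discreteLaplacian_sub_trace hTaylor).def
    (c := -(c * ∫ z, Γ z) / 2) (by nlinarith)
  obtain ⟨t, ⟨hup, hlo⟩, ht⟩ :=
    (((hupper.and hlower).filter_mono nhdsWithin_le_nhds).and
      (self_mem_nhdsWithin (s := {0}ᶜ))).exists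
  have ht2 : 0 < t ^ 2 := pow_two_pos_of_ne_zero ht
  rw [Real.norm_eq_abs, Real.norm_eq_abs, abs_of_pos ht2, abs_le] at hlo
  nlinarith [mul_nonneg ht2.le hHpsd.trace_nonneg, mul_pos ht2 (mul_pos hc (neg_pos.mpr hmass))]

/-- if the Riesz potential `P` admits a second-order Taylor expansion at `x`
with positive semidefinite Hessian, then `|x| ≤ 3`. -/
theorem stmt3 (n : ℕ) (hn : 2 ≤ n) (σ : ℝ) (hσ : σ ∈ Set.Ioo (0 : ℝ) 2)
    (Γ : EuclideanSpace ℝ (Fin n) → ℝ)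
    (hb : ∃ C : ℝ, ∀ z, |Γ z| ≤ C) (hm : Measurable Γ)
    (hneg : ∀ z, Γ z ≤ 0)
    (hsupp : ∀ z : EuclideanSpace ℝ (Fin n), z ∉ Metric.closedBall 0 3 → Γ z = 0)
    (hpos : 0 < volume {z : EuclideanSpace ℝ (Fin n) | Γ z < 0})
    (P : EuclideanSpace ℝ (Fin n) → ℝ) (hP : P = rieszPotential n σ Γ)
    (x : EuclideanSpace ℝ (Fin n)) (p : EuclideanSpace ℝ (Fin n))
    (H : Matrix (Fin n) (Fin n) ℝ) (hHsymm : H.IsSymm)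
    (hTaylor : (fun y : EuclideanSpace ℝ (Fin n) =>
        P (x + y) - P x - (∑ i, p i * y i) - (1 / 2) * ∑ i, ∑ j, H i j * y i * y j)
        =o[𝓝 (0 : EuclideanSpace ℝ (Fin n))] fun y => ‖y‖ ^ 2)
    (hHpsd : H.PosSemidef) :
    ‖x‖ ≤ 3 :=
  stmt3_general n hn σ hσ Γ hb hm hneg hsupp hpos P hP x p H hTaylor hHpsd
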